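/- arXiv:1511.02942 — 5 statements merged into one kernel-verified Lean document; each statement's English description precedes it below -/
import Mathlib

section
/- Suppose for some α > 0 there exist z*, y*, x* ∈ ℝ^{n×p} with A z* = z*, 1_n^T y* = 0, y* + α ∇f(x*) = 0, and x* = D^{-1} z*. Then x* is consensual and its common row is a global minimizer of f(x) = Σ_{i=1}^n f_i(x) over ℝ^p. -/
/-!
Since the powers of `A` converge to `φ 1ᵀ`, every fixed point `z*` of `A` equals `φ sᵀ`, where `s`
collects the column sums of `z*`; dividing by `D = n diag φ` makes every row of `x*` equal to
`x̄ = s / n`. Summing the rows of `y* + α ∇f(x*) = 0` and using `1ᵀ y* = 0` gives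
`Σᵢ ∇fᵢ(x̄) = 0`, and the tangent-plane inequality of the convex `fᵢ` turns this into global
minimality of `x̄`.
-/

open Matrix Filter Topology

/-- The rows of the gradient matrix `∇f(x)` are the gradients `∇fᵢ(x₍ᵢ₎)`. -/
noncomputable def gradMat {n p : ℕ}
    (g : Fin n → EuclideanSpace ℝ (Fin p) → EuclideanSpace ℝ (Fin p))
    (x : Matrix (Fin n) (Fin p) ℝ) : Matrix (Fin n) (Fin p) ℝ :=
  Matrix.of fun i j => g i ((WithLp.equiv 2 (Fin p → ℝ)).symm (x i)) j

open scoped RealInnerProductSpace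

theorem ConvexOn.add_inner_sub_le_of_hasGradientAt {E : Type*} [NormedAddCommGroup E]
    [InnerProductSpace ℝ E] [CompleteSpace E] {f : E → ℝ} {g x : E}
    (hf : ConvexOn ℝ Set.univ f) (hg : HasGradientAt f g x) (y : E) :
    f x + ⟪g, y - x⟫ ≤ f y := by
  let ℓ : ℝ →ᵃ[ℝ] E := AffineMap.lineMap x y
  have hline : ConvexOn ℝ Set.univ (f ∘ ℓ) := by
    simpa using hf.comp_affineMap ℓ
  have hderiv : HasDerivAt (f ∘ ℓ) ⟪g, y - x⟫ 0 := by
    have hg' : HasFDerivAt f (InnerProductSpace.toDual ℝ E g) (ℓ 0) := by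
      simpa [ℓ] using hg.hasFDerivAt
    simpa using hg'.comp_hasDerivAt (0 : ℝ) AffineMap.hasDerivAt_lineMap
  have hslope := hline.le_slope_of_hasDerivAt (Set.mem_univ 0) (Set.mem_univ 1) one_pos hderiv
  rw [slope_def_field] at hslope
  simp only [ℓ, Function.comp_apply, AffineMap.lineMap_apply_one, AffineMap.lineMap_apply_zero,
    sub_zero, div_one] at hslope
  linarith

theorem ConvexOn.isMinOn_sum_of_sum_gradient_eq_zero {E ι : Type*} [NormedAddCommGroup E]
    [InnerProductSpace ℝ E] [CompleteSpace E] {s : Finset ι} {f : ι → E → ℝ} {g : ι → E} {x : E}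
    (hf : ∀ i ∈ s, ConvexOn ℝ Set.univ (f i)) (hg : ∀ i ∈ s, HasGradientAt (f i) (g i) x)
    (hsum : ∑ i ∈ s, g i = 0) :
    IsMinOn (fun y => ∑ i ∈ s, f i y) Set.univ x := by
  refine isMinOn_univ_iff.mpr fun y => ?_
  calc ∑ i ∈ s, f i x = ∑ i ∈ s, f i x + ⟪∑ i ∈ s, g i, y - x⟫ := by simp [hsum]
    _ = ∑ i ∈ s, (f i x + ⟪g i, y - x⟫) := by rw [sum_inner, Finset.sum_add_distrib]
    _ ≤ ∑ i ∈ s, f i y := Finset.sum_le_sum fun i hi =>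
        (hf i hi).add_inner_sub_le_of_hasGradientAt (hg i hi) y

theorem Matrix.apply_eq_mul_sum_of_mul_eq_self {ι m R : Type*} [Fintype ι] [DecidableEq ι]
    [Semiring R] [TopologicalSpace R] [IsTopologicalSemiring R] [T2Space R]
    {A : Matrix ι ι R} {φ : ι → R}
    (hA : ∀ i k, Tendsto (fun t : ℕ => (A ^ t) i k) atTop (𝓝 (φ i)))
    {z : Matrix ι m R} (hz : A * z = z) (i : ι) (j : m) : z i j = φ i * ∑ k, z k j := by
  have hlim : Tendsto (fun t : ℕ => (A ^ t * z) i j) atTop (𝓝 (φ i * ∑ k, z k j)) := by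
    simp only [mul_apply, Finset.mul_sum]
    exact tendsto_finsetSum _ fun k _ => (hA i k).mul_const (z k j)
  have hpow : ∀ t : ℕ, A ^ t * z = z := fun t => by
    induction t with
    | zero => rw [pow_zero, Matrix.one_mul]
    | succ t ih => rw [pow_succ, Matrix.mul_assoc, hz, ih]
  simp only [hpow] at hlim
  exact tendsto_nhds_unique tendsto_const_nhds hlim

theorem Matrix.smul_diagonal_inv_mul_apply {ι m K : Type*} [Fintype ι] [DecidableEq ι] [Field K]
    {c : K} {d : ι → K} (hc : c ≠ 0) (hd : ∀ i, d i ≠ 0) (z : Matrix ι m K) (i : ι) (j : m) :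
    ((c • diagonal d)⁻¹ * z) i j = z i j / (c * d i) := by
  have hdet : IsUnit (c • diagonal d).det := by
    simpa [det_smul, det_diagonal, hc, Finset.prod_ne_zero_iff] using hd
  have := congrFun (congrFun (mul_nonsing_inv_cancel_left _ z hdet) i) j
  rw [smul_mul, smul_apply, diagonal_mul, smul_eq_mul, ← mul_assoc] at this
  rw [eq_div_iff (mul_ne_zero hc (hd i)), mul_comm, this]

theorem Matrix.sum_apply_eq_zero_of_add_smul_eq_zero {ι m K : Type*} [Fintype ι] [Field K]
    {Y G : Matrix ι m K} {α : K} (hα : α ≠ 0) (hY : ∀ j, ∑ i, Y i j = 0) (h : Y + α • G = 0)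
    (j : m) : ∑ i, G i j = 0 := by
  have hrow : ∀ i, Y i j + α * G i j = 0 := fun i => by
    simpa using congrFun (congrFun h i) j
  have : α * ∑ i, G i j = 0 := calc
    α * ∑ i, G i j = ∑ i, (Y i j + α * G i j) := by
      rw [Finset.sum_add_distrib, hY j, zero_add, Finset.mul_sum]
    _ = 0 := Finset.sum_eq_zero fun i _ => hrow i
  exact (mul_eq_zero.mp this).resolve_left hα

theorem extraPush_first_order_optimality_sufficient_general
    {n p : ℕ}
    (A : Matrix (Fin n) (Fin n) ℝ)
    (φ : Fin n → ℝ) (hφpos : ∀ i, 0 < φ i)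
    (hconv : ∀ i j, Tendsto (fun t : ℕ => (A ^ t) i j) atTop (𝓝 (φ i)))
    (D : Matrix (Fin n) (Fin n) ℝ) (hD : D = (n : ℝ) • Matrix.diagonal φ)
    (f : Fin n → EuclideanSpace ℝ (Fin p) → ℝ)
    (g : Fin n → EuclideanSpace ℝ (Fin p) → EuclideanSpace ℝ (Fin p))
    (hconvex : ∀ i, ConvexOn ℝ Set.univ (f i))
    (hgrad : ∀ i y, HasGradientAt (f i) (g i y) y)
    (α : ℝ) (hα : 0 < α)
    (zs ys xs : Matrix (Fin n) (Fin p) ℝ)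
    (hz : A * zs = zs)
    (hy : ∀ j, ∑ i, ys i j = 0)
    (hopt : ys + α • gradMat g xs = 0)
    (hx : xs = D⁻¹ * zs) :
    ∃ xbar : EuclideanSpace ℝ (Fin p),
      (∀ i j, xs i j = xbar j) ∧ ∀ y, ∑ i, f i xbar ≤ ∑ i, f i y := by
  let xbar : EuclideanSpace ℝ (Fin p) := WithLp.toLp 2 fun j => (∑ k, zs k j) / n
  have hcons : ∀ i j, xs i j = xbar j := fun i j => by
    have hn : (n : ℝ) ≠ 0 := Nat.cast_ne_zero.mpr i.pos.ne'
    rw [hx, hD, smul_diagonal_inv_mul_apply hn (fun i => (hφpos i).ne'),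
      apply_eq_mul_sum_of_mul_eq_self hconv hz i j, mul_comm (n : ℝ),
      mul_div_mul_left _ _ (hφpos i).ne']
  have hrows : ∀ i, (WithLp.equiv 2 (Fin p → ℝ)).symm (xs i) = xbar := fun i => by
    ext j; exact hcons i j
  have hgrad_sum : ∑ i, g i xbar = 0 := by
    ext j
    simpa [gradMat, hrows] using sum_apply_eq_zero_of_add_smul_eq_zero hα.ne' hy hopt j
  have hmin := ConvexOn.isMinOn_sum_of_sum_gradient_eq_zero (s := Finset.univ)
    (fun i _ => hconvex i) (fun i _ => hgrad i xbar) hgrad_sum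
  exact ⟨xbar, hcons, fun y => hmin (Set.mem_univ y)⟩

/-- if for some `α > 0` there exist `z*, y*, x*` with `A z* = z*`,
`1ₙᵀ y* = 0`, `y* + α ∇f(x*) = 0` and `x* = D⁻¹ z*`, then `x*` is consensual and
its common row is a global minimizer of `Σᵢ fᵢ`. -/
theorem extraPush_first_order_optimality_sufficient
    {n p : ℕ} (hn : 1 ≤ n) (hp : 1 ≤ p)
    (A : Matrix (Fin n) (Fin n) ℝ)
    (hA0 : ∀ i j, 0 ≤ A i j) (hA1 : ∀ j, ∑ i, A i j = 1)
    (φ : Fin n → ℝ) (hφpos : ∀ i, 0 < φ i) (hφ1 : ∑ i, φ i = 1)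
    (hconv : ∀ i j, Tendsto (fun t : ℕ => (A ^ t) i j) atTop (𝓝 (φ i)))
    (D : Matrix (Fin n) (Fin n) ℝ) (hD : D = (n : ℝ) • Matrix.diagonal φ)
    (f : Fin n → EuclideanSpace ℝ (Fin p) → ℝ)
    (g : Fin n → EuclideanSpace ℝ (Fin p) → EuclideanSpace ℝ (Fin p))
    (hconvex : ∀ i, ConvexOn ℝ Set.univ (f i))
    (hgrad : ∀ i y, HasGradientAt (f i) (g i y) y)
    (α : ℝ) (hα : 0 < α)
    (zs ys xs : Matrix (Fin n) (Fin p) ℝ)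
    (hz : A * zs = zs)
    (hy : ∀ j, ∑ i, ys i j = 0)
    (hopt : ys + α • gradMat g xs = 0)
    (hx : xs = D⁻¹ * zs) :
    ∃ xbar : EuclideanSpace ℝ (Fin p),
      (∀ i j, xs i j = xbar j) ∧ ∀ y, ∑ i, f i xbar ≤ ∑ i, f i y :=
  extraPush_first_order_optimality_sufficient_general A φ hφpos hconv D hD f g hconvex hgrad α hα zs
    ys xs hz hy hopt hx
end

section
/- Let A ∈ ℝ^{n×n}, Ā := (I_n + A)/2, and let z^t, g^t ∈ ℝ^{n×p} (t = 0, 1, 2, …) be sequences satisfying z^1 = A z^0 − g^0 and z^t = (A + I_n) z^{t−1} − Ā z^{t−2} − (g^{t−1} − g^{t−2}) for all t ≥ 2. Define y^t := Σ_{k=0}^t (Ā − A) z^k. Then for every t ≥ 0, Ā z^{t+1} = Ā z^t − g^t − y^{t+1}. -/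
/-! The residual `r t := Ā z^{t+1} - Ā z^t + g^t + y^{t+1}` vanishes at `t = 0` by the
initial step, and `r (t+1) - r t` equals `z^{t+2} - (A + I) z^{t+1} + Ā z^t + (g^{t+1} - g^t)`
because `Ā + (Ā - A) = I` and `2 Ā = A + I`; by the recursion this difference is zero. -/

section

variable {ι κ R : Type*} [Fintype ι] [DecidableEq ι] [Ring R] {A Abar : Matrix ι ι R}

theorem add_sub_mul_eq_self_of_add_self_eq (hAbar : Abar + Abar = 1 + A)
    (X : Matrix ι κ R) : Abar * X + (Abar - A) * X = X := by
  rw [← Matrix.add_mul, ← add_sub_assoc, hAbar, add_sub_cancel_right, Matrix.one_mul]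

theorem mul_succ_eq_sub_sub_runningSum (hAbar : Abar + Abar = 1 + A)
    {z g y : ℕ → Matrix ι κ R}
    (h1 : z 1 = A * z 0 - g 0)
    (hrec : ∀ t, z (t + 2) = (A + 1) * z (t + 1) - Abar * z t - (g (t + 1) - g t))
    (hy : ∀ t, y t = ∑ k ∈ Finset.range (t + 1), (Abar - A) * z k) (t : ℕ) :
    Abar * z (t + 1) = Abar * z t - g t - y (t + 1) := by
  have hsplit : ∀ X : Matrix ι κ R, Abar * X + (Abar - A) * X = X :=
    add_sub_mul_eq_self_of_add_self_eq hAbar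
  have hy_succ : ∀ t, y (t + 1) = y t + (Abar - A) * z (t + 1) := fun t => by
    rw [hy, hy, Finset.sum_range_succ]
  let r : ℕ → Matrix ι κ R := fun t => Abar * z (t + 1) - Abar * z t + g t + y (t + 1)
  have hr_zero : r 0 = 0 := by
    have hy0 : y 0 = (Abar - A) * z 0 := by rw [hy, Finset.sum_range_one]
    have hz0 : (Abar - A) * z 0 = Abar * z 0 - A * z 0 := Matrix.sub_mul _ _ _
    simp only [r, hy_succ, hy0]
    linear_combination (norm := abel) hsplit (z 1) + h1 + hz0
  have hr_succ : ∀ t, r (t + 1) = r t := fun t => by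
    have hdouble : (A + 1) * z (t + 1) = Abar * z (t + 1) + Abar * z (t + 1) := by
      rw [← Matrix.add_mul, hAbar, add_comm]
    simp only [r, hy_succ (t + 1)]
    linear_combination (norm := abel) hsplit (z (t + 2)) + hrec t + hdouble
  have hr : r t = 0 := by
    induction t with
    | zero => exact hr_zero
    | succ t ih => rw [hr_succ, ih]
  simp only [r] at hr
  linear_combination (norm := abel) hr

end

theorem extraPush_running_sum_reformulation_general
    {n p : ℕ}
    (A : Matrix (Fin n) (Fin n) ℝ)
    (Abar : Matrix (Fin n) (Fin n) ℝ) (hAbar : Abar = (2⁻¹ : ℝ) • (1 + A))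
    (z g : ℕ → Matrix (Fin n) (Fin p) ℝ)
    (h1 : z 1 = A * z 0 - g 0)
    (hrec : ∀ t, z (t + 2) = (A + 1) * z (t + 1) - Abar * z t - (g (t + 1) - g t))
    (y : ℕ → Matrix (Fin n) (Fin p) ℝ)
    (hy : ∀ t, y t = ∑ k ∈ Finset.range (t + 1), (Abar - A) * z k) :
    ∀ t, Abar * z (t + 1) = Abar * z t - g t - y (t + 1) := by
  have hdouble : Abar + Abar = 1 + A := by rw [hAbar]; module
  exact mul_succ_eq_sub_sub_runningSum hdouble h1 hrec hy

/-- the two-step recursion `z^t = (A + I) z^{t−1} − Ā z^{t−2} −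
(g^{t−1} − g^{t−2})` (with `z^1 = A z^0 − g^0`) can be rewritten, with
`y^t := Σ_{k=0}^t (Ā − A) z^k`, as `Ā z^{t+1} = Ā z^t − g^t − y^{t+1}`. -/
theorem extraPush_running_sum_reformulation
    {n p : ℕ} (hn : 1 ≤ n) (hp : 1 ≤ p)
    (A : Matrix (Fin n) (Fin n) ℝ)
    (Abar : Matrix (Fin n) (Fin n) ℝ) (hAbar : Abar = (2⁻¹ : ℝ) • (1 + A))
    (z g : ℕ → Matrix (Fin n) (Fin p) ℝ)
    (h1 : z 1 = A * z 0 - g 0)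
    (hrec : ∀ t, z (t + 2) = (A + 1) * z (t + 1) - Abar * z t - (g (t + 1) - g t))
    (y : ℕ → Matrix (Fin n) (Fin p) ℝ)
    (hy : ∀ t, y t = ∑ k ∈ Finset.range (t + 1), (Abar - A) * z k) :
    ∀ t, Abar * z (t + 1) = Abar * z t - g t - y (t + 1) :=
  extraPush_running_sum_reformulation_general A Abar hAbar z g h1 hrec y hy
end

section
/- Consider the ExtraPush iteration: w^0 = 1_n, w^t = A w^{t−1} for t ≥ 1; x^t = diag(w^t)^{-1} z^t for all t ≥ 0; z^1 = A z^0 − α ∇f(x^0); and z^t = (A + I_n) z^{t−1} − Ā z^{t−2} − α(∇f(x^{t−1}) − ∇f(x^{t−2})) for t ≥ 2, where α > 0 and z^0 ∈ ℝ^{n×p} is arbitrary. Define y^t := Σ_{k=0}^t (Ā − A) z^k. Suppose there exist z*, y* ∈ ℝ^{n×p} and a strictly increasing sequence of indices (t_j) such that z^{t_j} → z*, z^{t_j+1} → z*, y^{t_j} → y*, and y^{t_j+1} → y* as j → ∞. Then, setting x* := D^{-1} z*, the triple (z*, y*, x*) satisfies the first-order optimality conditions: A z* = z*, 1_n^T y*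 = 0, y* + α ∇f(x*) = 0, and x* = D^{-1} z*. -/
/-!
Adding up the two-step recursion gives the one-step identity
`z^{t+1} + y^t = Ā z^t - α ∇f(x^t)`. Along the subsequence `y^{t+1} - y^t = (Ā - A) z^{t+1}`
tends to `0`, so `(Ā - A) z* = 0`, i.e. `A z* = Ā z* = z*`, and the one-step identity passes
to the limit as `z* + y* = z* - α ∇f(x*)`. The limit `x*` exists because
`w^t = A^t 1 → n φ`, which has no zero entry, so `diag(w^t)` is eventually invertible with
inverse converging to `D⁻¹`. Finally `1ᵀ (Ā - A) = 0` by column stochasticity, so every `y^t`,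
and hence `y*`, has zero column sums.
-/

open Matrix Filter Topology

theorem continuous_gradMat {n p : ℕ}
    {g : Fin n → EuclideanSpace ℝ (Fin p) → EuclideanSpace ℝ (Fin p)}
    (hg : ∀ i, Continuous (g i)) : Continuous (gradMat g) :=
  continuous_matrix fun i j =>
    (PiLp.continuous_apply 2 _ j).comp <| (hg i).comp <|
      (PiLp.continuous_toLp 2 _).comp (continuous_apply i)

theorem Filter.Tendsto.matrix_mul {ι m n o R : Type*} [Fintype n] [Mul R] [AddCommMonoid R]
    [TopologicalSpace R] [ContinuousAdd R] [ContinuousMul R] {l : Filter ι}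
    {M : ι → Matrix m n R} {N : ι → Matrix n o R} {M₀ : Matrix m n R} {N₀ : Matrix n o R}
    (hM : Tendsto M l (𝓝 M₀)) (hN : Tendsto N l (𝓝 N₀)) :
    Tendsto (fun t => M t * N t) l (𝓝 (M₀ * N₀)) :=
  ((continuous_fst.matrix_mul continuous_snd).tendsto (M₀, N₀)).comp (hM.prodMk_nhds hN)

namespace Matrix

variable {m n : Type*} [Fintype m] [DecidableEq m]

theorem inv_diagonal_of_ne_zero {K : Type*} [Field K] {v : m → K} (hv : ∀ i, v i ≠ 0) :
    (diagonal v)⁻¹ = diagonal v⁻¹ :=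
  inv_eq_left_inv <| by
    rw [diagonal_mul_diagonal, ← diagonal_one]
    exact congrArg diagonal (funext fun i => inv_mul_cancel₀ (hv i))

theorem eq_pow_mulVec_of_succ {R : Type*} [Semiring R] {A : Matrix m m R} {w : ℕ → m → R}
    (hw : ∀ t, w (t + 1) = A *ᵥ w t) (t : ℕ) : w t = A ^ t *ᵥ w 0 := by
  induction t with
  | zero => rw [pow_zero, one_mulVec]
  | succ t ih => rw [hw, ih, mulVec_mulVec, pow_succ']

theorem tendsto_pow_mulVec_one {R : Type*} [Semiring R] [TopologicalSpace R] [ContinuousAdd R]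
    {A : Matrix m m R} {φ : m → R}
    (h : ∀ i j, Tendsto (fun t : ℕ => (A ^ t) i j) atTop (𝓝 (φ i))) :
    Tendsto (fun t : ℕ => A ^ t *ᵥ 1) atTop (𝓝 (Fintype.card m • φ)) :=
  tendsto_pi_nhds.2 fun i => by
    simpa [mulVec, dotProduct] using tendsto_finsetSum Finset.univ fun j _ => h i j

theorem _root_.Filter.Tendsto.inv_diagonal_mul {K ι : Type*} [Field K] [TopologicalSpace K]
    [IsTopologicalDivisionRing K] [T1Space K] {l : Filter ι} {w : ι → m → K} {c : m → K}
    {z : ι → Matrix m n K} {Z : Matrix m n K}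
    (hw : Tendsto w l (𝓝 c)) (hc : ∀ i, c i ≠ 0) (hz : Tendsto z l (𝓝 Z)) :
    Tendsto (fun t => (diagonal (w t))⁻¹ * z t) l (𝓝 ((diagonal c)⁻¹ * Z)) := by
  have hw_ne : ∀ᶠ t in l, ∀ i, w t i ≠ 0 :=
    eventually_all.2 fun i => (tendsto_pi_nhds.1 hw i).eventually_ne (hc i)
  have hw_inv : Tendsto (fun t => (w t)⁻¹) l (𝓝 c⁻¹) :=
    tendsto_pi_nhds.2 fun i => (tendsto_pi_nhds.1 hw i).inv₀ (hc i)
  rw [inv_diagonal_of_ne_zero hc]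
  refine Tendsto.congr' (f₁ := fun t => diagonal (w t)⁻¹ * z t)
    (hw_ne.mono fun t ht => by dsimp only; rw [inv_diagonal_of_ne_zero ht]) ?_
  exact ((continuous_id.matrix_diagonal.tendsto _).comp hw_inv).matrix_mul hz

end Matrix

section ExtraPush

variable {m n R : Type*} [Fintype m] [Ring R] {A Abar : Matrix m m R} {α : R}
  {G z y : ℕ → Matrix m n R}

theorem extraPush_y_succ (hy : ∀ t, y t = ∑ k ∈ Finset.range (t + 1), (Abar - A) * z k)
    (t : ℕ) : y (t + 1) = y t + (Abar - A) * z (t + 1) := by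
  rw [hy, hy, Finset.sum_range_succ]

variable [DecidableEq m]

theorem extraPush_z_succ_add_y (hz1 : z 1 = A * z 0 - α • G 0)
    (hrec : ∀ t, z (t + 2) = (A + 1) * z (t + 1) - Abar * z t - α • (G (t + 1) - G t))
    (hy : ∀ t, y t = ∑ k ∈ Finset.range (t + 1), (Abar - A) * z k) (t : ℕ) :
    z (t + 1) + y t = Abar * z t - α • G t := by
  induction t with
  | zero =>
    rw [hz1, hy, Finset.sum_range_one, Matrix.sub_mul]
    abel
  | succ t ih =>
    rw [eq_sub_iff_add_eq] at ih
    rw [hrec, extraPush_y_succ hy, ← ih, Matrix.sub_mul, Matrix.add_mul, Matrix.one_mul,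
      smul_sub]
    abel

end ExtraPush

section ExtraPushLimit

variable {m n R : Type*} [Fintype m] [Ring R] [TopologicalSpace R] [IsTopologicalRing R]
  [T2Space R] {A Abar : Matrix m m R} {α : R} {G z y : ℕ → Matrix m n R} {tj : ℕ → ℕ}
  {zs ys Gs : Matrix m n R}

theorem extraPush_sub_mul_limit_eq_zero
    (hy : ∀ t, y t = ∑ k ∈ Finset.range (t + 1), (Abar - A) * z k)
    (hz1 : Tendsto (fun k => z (tj k + 1)) atTop (𝓝 zs))
    (hyl : Tendsto (fun k => y (tj k)) atTop (𝓝 ys))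
    (hyl1 : Tendsto (fun k => y (tj k + 1)) atTop (𝓝 ys)) :
    (Abar - A) * zs = 0 := by
  have hdiff : Tendsto (fun k => y (tj k + 1) - y (tj k)) atTop (𝓝 0) := by
    simpa using hyl1.sub hyl
  simp only [extraPush_y_succ hy, add_sub_cancel_left] at hdiff
  exact tendsto_nhds_unique (tendsto_const_nhds.matrix_mul hz1) hdiff

theorem extraPush_limit_eq (hzy : ∀ t, z (t + 1) + y t = Abar * z t - α • G t)
    (hz : Tendsto (fun k => z (tj k)) atTop (𝓝 zs))
    (hz1 : Tendsto (fun k => z (tj k + 1)) atTop (𝓝 zs))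
    (hyl : Tendsto (fun k => y (tj k)) atTop (𝓝 ys))
    (hG : Tendsto (fun k => G (tj k)) atTop (𝓝 Gs)) :
    zs + ys = Abar * zs - α • Gs := by
  refine tendsto_nhds_unique (hz1.add hyl) ?_
  simp only [hzy]
  exact (tendsto_const_nhds.matrix_mul hz).sub (hG.const_smul α)

end ExtraPushLimit

section LazyMatrix

variable {m n : Type*} [Fintype m] [DecidableEq m] {A Abar : Matrix m m ℝ}

theorem one_vecMul_extraPush_y (hAbar : Abar = (2⁻¹ : ℝ) • (1 + A))
    (hA1 : ∀ j, ∑ i, A i j = 1) {z y : ℕ → Matrix m n ℝ}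
    (hy : ∀ t, y t = ∑ k ∈ Finset.range (t + 1), (Abar - A) * z k) (t : ℕ) :
    1 ᵥ* y t = 0 := by
  have hA : 1 ᵥ* A = 1 := funext fun j => by simpa [vecMul, dotProduct] using hA1 j
  have hB : 1 ᵥ* (Abar - A) = 0 := by
    rw [hAbar, vecMul_sub, vecMul_smul, vecMul_add, vecMul_one, hA]
    module
  simp [hy, vecMul_sum, ← vecMul_vecMul, hB]

theorem mul_eq_self_of_sub_mul_eq_zero (hAbar : Abar = (2⁻¹ : ℝ) • (1 + A))
    {Z : Matrix m n ℝ} (h : (Abar - A) * Z = 0) : A * Z = Z := by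
  rw [hAbar, Matrix.sub_mul, Matrix.smul_mul, Matrix.add_mul, Matrix.one_mul] at h
  have h2 : A * Z - Z = (-2 : ℝ) • ((2⁻¹ : ℝ) • (Z + A * Z) - A * Z) := by module
  rwa [h, smul_zero, sub_eq_zero] at h2

end LazyMatrix

theorem extraPush_limit_point_optimality_general
    {n p : ℕ}
    (A : Matrix (Fin n) (Fin n) ℝ)
    (hA1 : ∀ j, ∑ i, A i j = 1)
    (Abar : Matrix (Fin n) (Fin n) ℝ) (hAbar : Abar = (2⁻¹ : ℝ) • (1 + A))
    (φ : Fin n → ℝ) (hφpos : ∀ i, 0 < φ i)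
    (hconv : ∀ i j, Tendsto (fun t : ℕ => (A ^ t) i j) atTop (𝓝 (φ i)))
    (D : Matrix (Fin n) (Fin n) ℝ) (hD : D = (n : ℝ) • Matrix.diagonal φ)
    (g : Fin n → EuclideanSpace ℝ (Fin p) → EuclideanSpace ℝ (Fin p))
    (hgcont : ∀ i, Continuous (g i))
    (α : ℝ)
    (w : ℕ → Fin n → ℝ)
    (hw0 : w 0 = fun _ => 1) (hw : ∀ t, w (t + 1) = A *ᵥ w t)
    (z x : ℕ → Matrix (Fin n) (Fin p) ℝ)
    (hx : ∀ t, x t = (Matrix.diagonal (w t))⁻¹ * z t)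
    (hz1 : z 1 = A * z 0 - α • gradMat g (x 0))
    (hrec : ∀ t, z (t + 2) =
      (A + 1) * z (t + 1) - Abar * z t - α • (gradMat g (x (t + 1)) - gradMat g (x t)))
    (y : ℕ → Matrix (Fin n) (Fin p) ℝ)
    (hy : ∀ t, y t = ∑ k ∈ Finset.range (t + 1), (Abar - A) * z k)
    (zs ys : Matrix (Fin n) (Fin p) ℝ)
    (tj : ℕ → ℕ) (htj : StrictMono tj)
    (hzlim : ∀ i j, Tendsto (fun k => z (tj k) i j) atTop (𝓝 (zs i j)))
    (hzlim1 : ∀ i j, Tendsto (fun k => z (tj k + 1) i j) atTop (𝓝 (zs i j)))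
    (hylim : ∀ i j, Tendsto (fun k => y (tj k) i j) atTop (𝓝 (ys i j)))
    (hylim1 : ∀ i j, Tendsto (fun k => y (tj k + 1) i j) atTop (𝓝 (ys i j))) :
    A * zs = zs ∧
    (∀ j, ∑ i, ys i j = 0) ∧
    ys + α • gradMat g (D⁻¹ * zs) = 0 ∧
    D⁻¹ * zs = D⁻¹ * zs := by
  have entrywise {u : ℕ → Matrix (Fin n) (Fin p) ℝ} {U : Matrix (Fin n) (Fin p) ℝ}
      (h : ∀ i j, Tendsto (fun k => u k i j) atTop (𝓝 (U i j))) : Tendsto u atTop (𝓝 U) :=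
    tendsto_pi_nhds.2 fun i => tendsto_pi_nhds.2 (h i)
  have hw_lim : Tendsto w atTop (𝓝 ((n : ℝ) • φ)) := by
    have hw_eq : w = fun t => A ^ t *ᵥ 1 :=
      funext fun t => by rw [eq_pow_mulVec_of_succ hw, hw0]; rfl
    simpa only [hw_eq, Fintype.card_fin, ← Nat.cast_smul_eq_nsmul ℝ] using
      tendsto_pow_mulVec_one hconv
  have hx_lim : Tendsto (fun k => x (tj k)) atTop (𝓝 (D⁻¹ * zs)) := by
    simp only [hx, hD, ← diagonal_smul]
    exact (hw_lim.comp htj.tendsto_atTop).inv_diagonal_mul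
      (fun i => (mul_pos (Nat.cast_pos.2 i.pos) (hφpos i)).ne') (entrywise hzlim)
  have hAz : A * zs = zs := mul_eq_self_of_sub_mul_eq_zero hAbar <|
    extraPush_sub_mul_limit_eq_zero hy (entrywise hzlim1) (entrywise hylim) (entrywise hylim1)
  have hlim := extraPush_limit_eq
    (extraPush_z_succ_add_y (G := fun t => gradMat g (x t)) hz1 hrec hy) (entrywise hzlim)
    (entrywise hzlim1) (entrywise hylim) (((continuous_gradMat hgcont).tendsto _).comp hx_lim)
  have hys : 1 ᵥ* ys = 0 :=
    (isClosed_eq (continuous_const.matrix_vecMul continuous_id) continuous_const).mem_of_tendsto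
      (entrywise hylim) (Eventually.of_forall fun k => one_vecMul_extraPush_y hAbar hA1 hy (tj k))
  refine ⟨hAz, fun j => by simpa [vecMul, dotProduct] using congrFun hys j, ?_, rfl⟩
  rw [hAbar, Matrix.smul_mul, Matrix.add_mul, Matrix.one_mul, hAz] at hlim
  linear_combination (norm := module) hlim

/-- any limit point `(z*, y*)` (along a subsequence, together with its
shift by one) of the ExtraPush iteration satisfies, with `x* := D⁻¹ z*`, the
first-order optimality conditions `A z* = z*`, `1ₙᵀ y* = 0`, `y* + α ∇f(x*) = 0`,
`x* = D⁻¹ z*`. -/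
theorem extraPush_limit_point_optimality
    {n p : ℕ} (hn : 1 ≤ n) (hp : 1 ≤ p)
    (A : Matrix (Fin n) (Fin n) ℝ)
    (hA0 : ∀ i j, 0 ≤ A i j) (hA1 : ∀ j, ∑ i, A i j = 1)
    (hAdiag : ∀ j, 0 < A j j)
    (Abar : Matrix (Fin n) (Fin n) ℝ) (hAbar : Abar = (2⁻¹ : ℝ) • (1 + A))
    (φ : Fin n → ℝ) (hφpos : ∀ i, 0 < φ i) (hφ1 : ∑ i, φ i = 1)
    (hconv : ∀ i j, Tendsto (fun t : ℕ => (A ^ t) i j) atTop (𝓝 (φ i)))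
    (D : Matrix (Fin n) (Fin n) ℝ) (hD : D = (n : ℝ) • Matrix.diagonal φ)
    (f : Fin n → EuclideanSpace ℝ (Fin p) → ℝ)
    (g : Fin n → EuclideanSpace ℝ (Fin p) → EuclideanSpace ℝ (Fin p))
    (hconvex : ∀ i, ConvexOn ℝ Set.univ (f i))
    (hgrad : ∀ i y, HasGradientAt (f i) (g i y) y)
    (hgcont : ∀ i, Continuous (g i))
    (α : ℝ) (hα : 0 < α)
    (w : ℕ → Fin n → ℝ)
    (hw0 : w 0 = fun _ => 1) (hw : ∀ t, w (t + 1) = A *ᵥ w t)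
    (z x : ℕ → Matrix (Fin n) (Fin p) ℝ)
    (hx : ∀ t, x t = (Matrix.diagonal (w t))⁻¹ * z t)
    (hz1 : z 1 = A * z 0 - α • gradMat g (x 0))
    (hrec : ∀ t, z (t + 2) =
      (A + 1) * z (t + 1) - Abar * z t - α • (gradMat g (x (t + 1)) - gradMat g (x t)))
    (y : ℕ → Matrix (Fin n) (Fin p) ℝ)
    (hy : ∀ t, y t = ∑ k ∈ Finset.range (t + 1), (Abar - A) * z k)
    (zs ys : Matrix (Fin n) (Fin p) ℝ)
    (tj : ℕ → ℕ) (htj : StrictMono tj)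
    (hzlim : ∀ i j, Tendsto (fun k => z (tj k) i j) atTop (𝓝 (zs i j)))
    (hzlim1 : ∀ i j, Tendsto (fun k => z (tj k + 1) i j) atTop (𝓝 (zs i j)))
    (hylim : ∀ i j, Tendsto (fun k => y (tj k) i j) atTop (𝓝 (ys i j)))
    (hylim1 : ∀ i j, Tendsto (fun k => y (tj k + 1) i j) atTop (𝓝 (ys i j))) :
    A * zs = zs ∧
    (∀ j, ∑ i, ys i j = 0) ∧
    ys + α • gradMat g (D⁻¹ * zs) = 0 ∧
    D⁻¹ * zs = D⁻¹ * zs :=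
  extraPush_limit_point_optimality_general A hA1 Abar hAbar φ hφpos hconv D hD g hgcont α w hw0 hw z
    x hx hz1 hrec y hy zs ys tj htj hzlim hzlim1 hylim hylim1
end

section
/- Let (z*, y*, x*) be n×p real matrices satisfying A z* = z*, 1_n^T y* = 0, y* + α ∇f(x*) = 0, and x* = D^{-1} z*, for some α > 0, and let u* ∈ ℝ^{n×p} satisfy (Ā − A) u* = y*. Set M := D^{-1}(Ā − A). Then M u* + α D^{-1} ∇f(D^{-1} z*) = 0 and M^T z* = 0; equivalently, with v* := (z*; u*) ∈ ℝ^{2n×p} stacked vertically, S := [[0, M], [−M^T, 0]] ∈ ℝ^{2n×2n} in 2×2 block form, and ∇f̄(v*) := (D^{-1}∇f(D^{-1}z*); 0), one has S v* + α ∇f̄(v*) = 0. -/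
open Matrix Filter Topology

/-- Vertical stacking `(X; Y)` of two `n × p` matrices into a `2n × p` matrix. -/
def vstack {n p : ℕ} (X Y : Matrix (Fin n) (Fin p) ℝ) :
    Matrix (Fin n ⊕ Fin n) (Fin p) ℝ := Matrix.of (Sum.elim X Y)

/-! Passing to the limit in `Aᵗ z* = z*` gives `z* = φ (1ᵀ z*)`. Hence `Mᵀ z* = 0` amounts to
`φᵀ D⁻¹ (Ā − A) = 0`, which holds because `φᵀ D⁻¹ = 1ᵀ / n` and the columns of `Ā − A = (I − A)/2`
sum to zero. The other block row is `D⁻¹` applied to the optimality condition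
`y* + α ∇f(x*) = 0`, using `(Ā − A) u* = y*` and `x* = D⁻¹ z*`. -/

namespace Matrix

variable {m n R : Type*} [Fintype m] [DecidableEq m]

theorem pow_mul_eq_of_mul_eq [Semiring R] {A : Matrix m m R} {Z : Matrix m n R}
    (hZ : A * Z = Z) (t : ℕ) : A ^ t * Z = Z := by
  induction t with
  | zero => rw [pow_zero, Matrix.one_mul]
  | succ t ih => rw [pow_succ, Matrix.mul_assoc, hZ, ih]

theorem mul_eq_of_tendsto_pow [Semiring R] [TopologicalSpace R] [IsTopologicalSemiring R]
    [T2Space R] {A L : Matrix m m R} {Z : Matrix m n R}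
    (hL : Tendsto (fun t : ℕ => A ^ t) atTop (𝓝 L)) (hZ : A * Z = Z) : L * Z = Z := by
  have hlim : Tendsto (fun t : ℕ => A ^ t * Z) atTop (𝓝 (L * Z)) :=
    ((continuous_id.matrix_mul continuous_const).tendsto L).comp hL
  simp only [pow_mul_eq_of_mul_eq hZ] at hlim
  exact tendsto_nhds_unique hlim tendsto_const_nhds

theorem eq_vecMulVec_of_mul_eq_of_tendsto_pow [Semiring R] [TopologicalSpace R]
    [IsTopologicalSemiring R] [T2Space R] {A : Matrix m m R} {φ : m → R} {Z : Matrix m n R}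
    (hconv : ∀ i j, Tendsto (fun t : ℕ => (A ^ t) i j) atTop (𝓝 (φ i))) (hZ : A * Z = Z) :
    Z = vecMulVec φ (1 ᵥ* Z) := by
  have hL : Tendsto (fun t : ℕ => A ^ t) atTop (𝓝 (vecMulVec φ 1)) :=
    tendsto_pi_nhds.2 fun i => tendsto_pi_nhds.2 fun j => by
      simpa [vecMulVec_apply] using hconv i j
  rw [← vecMulVec_mul, mul_eq_of_tendsto_pow hL hZ]

theorem one_vecMul_half_one_add_sub_eq_zero [Field R] [NeZero (2 : R)]
    {A : Matrix m m R} (hA : 1 ᵥ* A = 1) : 1 ᵥ* ((2⁻¹ : R) • (1 + A) - A) = 0 := by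
  rw [vecMul_sub, vecMul_smul, vecMul_add, vecMul_one, hA, ← two_smul R (1 : m → R), smul_smul,
    inv_mul_cancel₀ two_ne_zero, one_smul, sub_self]

theorem vecMul_inv_smul_diagonal_self [Field R] (c : R) {d : m → R} (hd : ∀ i, d i ≠ 0) :
    d ᵥ* (c • diagonal d)⁻¹ = c⁻¹ • 1 := by
  rcases eq_or_ne c 0 with rfl | hc
  · simp
  have hinv : (c • diagonal d)⁻¹ = diagonal fun i => (c * d i)⁻¹ := by
    refine inv_eq_left_inv ?_
    rw [Matrix.mul_smul, diagonal_mul_diagonal, ← diagonal_smul, ← diagonal_one]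
    congr 1
    ext i
    simp only [Pi.smul_apply, smul_eq_mul]
    field_simp [hd i]
  ext i
  simp [hinv, vecMul_diagonal, hd i]

theorem vecMul_inv_smul_diagonal_mul_eq_zero [Field R] (c : R) {d : m → R} (hd : ∀ i, d i ≠ 0)
    {B : Matrix m n R} (hB : 1 ᵥ* B = 0) : d ᵥ* ((c • diagonal d)⁻¹ * B) = 0 := by
  rw [← vecMul_vecMul, vecMul_inv_smul_diagonal_self c hd, smul_vecMul, hB, smul_zero]

end Matrix

theorem normalizedExtraPush_saddle_point_identity_general
    {n p : ℕ}
    (A : Matrix (Fin n) (Fin n) ℝ)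
    (hA1 : ∀ j, ∑ i, A i j = 1)
    (Abar : Matrix (Fin n) (Fin n) ℝ) (hAbar : Abar = (2⁻¹ : ℝ) • (1 + A))
    (φ : Fin n → ℝ) (hφpos : ∀ i, 0 < φ i)
    (hconv : ∀ i j, Tendsto (fun t : ℕ => (A ^ t) i j) atTop (𝓝 (φ i)))
    (D : Matrix (Fin n) (Fin n) ℝ) (hD : D = (n : ℝ) • Matrix.diagonal φ)
    (g : Fin n → EuclideanSpace ℝ (Fin p) → EuclideanSpace ℝ (Fin p))
    (α : ℝ)
    (zs ys xs us : Matrix (Fin n) (Fin p) ℝ)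
    (hz : A * zs = zs)
    (hopt : ys + α • gradMat g xs = 0)
    (hx : xs = D⁻¹ * zs)
    (hu : (Abar - A) * us = ys)
    (M : Matrix (Fin n) (Fin n) ℝ) (hM : M = D⁻¹ * (Abar - A))
    (S : Matrix (Fin n ⊕ Fin n) (Fin n ⊕ Fin n) ℝ)
    (hS : S = Matrix.fromBlocks 0 M (-Mᵀ) 0) :
    M * us + α • (D⁻¹ * gradMat g (D⁻¹ * zs)) = 0 ∧
    Mᵀ * zs = 0 ∧
    S * vstack zs us + α • vstack (D⁻¹ * gradMat g (D⁻¹ * zs)) 0 = 0 := by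
  have hA : 1 ᵥ* A = 1 := funext fun j => by simpa [vecMul, dotProduct] using hA1 j
  have hMu : M * us + α • (D⁻¹ * gradMat g (D⁻¹ * zs)) = 0 := by
    rw [hM, Matrix.mul_assoc, hu, ← hx, ← Matrix.mul_smul, ← Matrix.mul_add, hopt,
      Matrix.mul_zero]
  have hMz : Mᵀ * zs = 0 := by
    rw [eq_vecMulVec_of_mul_eq_of_tendsto_pow hconv hz, mul_vecMulVec, mulVec_transpose, hM, hD,
      hAbar, vecMul_inv_smul_diagonal_mul_eq_zero _ (fun i => (hφpos i).ne')
        (one_vecMul_half_one_add_sub_eq_zero hA), zero_vecMulVec]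
  refine ⟨hMu, hMz, ?_⟩
  change S * fromRows zs us + α • fromRows (D⁻¹ * gradMat g (D⁻¹ * zs)) 0 = 0
  rw [hS, fromBlocks_mul_fromRows]
  ext (i | i) j
  · simpa using congrFun (congrFun hMu i) j
  · simpa using congrFun (congrFun hMz i) j

/-- if `(z*, y*, x*)` satisfies the first-order optimality conditions and
`(Ā − A) u* = y*`, then with `M := D⁻¹(Ā − A)` one has `M u* + α D⁻¹ ∇f(D⁻¹ z*) = 0`
and `Mᵀ z* = 0`; equivalently, `S v* + α ∇f̄(v*) = 0` where `v* = (z*; u*)`,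
`S = [[0, M], [−Mᵀ, 0]]` and `∇f̄(v*) = (D⁻¹ ∇f(D⁻¹ z*); 0)`. -/
theorem normalizedExtraPush_saddle_point_identity
    {n p : ℕ} (hn : 1 ≤ n) (hp : 1 ≤ p)
    (A : Matrix (Fin n) (Fin n) ℝ)
    (hA0 : ∀ i j, 0 ≤ A i j) (hA1 : ∀ j, ∑ i, A i j = 1)
    (Abar : Matrix (Fin n) (Fin n) ℝ) (hAbar : Abar = (2⁻¹ : ℝ) • (1 + A))
    (φ : Fin n → ℝ) (hφpos : ∀ i, 0 < φ i) (hφ1 : ∑ i, φ i = 1)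
    (hconv : ∀ i j, Tendsto (fun t : ℕ => (A ^ t) i j) atTop (𝓝 (φ i)))
    (D : Matrix (Fin n) (Fin n) ℝ) (hD : D = (n : ℝ) • Matrix.diagonal φ)
    (f : Fin n → EuclideanSpace ℝ (Fin p) → ℝ)
    (g : Fin n → EuclideanSpace ℝ (Fin p) → EuclideanSpace ℝ (Fin p))
    (hconvex : ∀ i, ConvexOn ℝ Set.univ (f i))
    (hgrad : ∀ i y, HasGradientAt (f i) (g i y) y)
    (α : ℝ) (hα : 0 < α)
    (zs ys xs us : Matrix (Fin n) (Fin p) ℝ)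
    (hz : A * zs = zs)
    (hy : ∀ j, ∑ i, ys i j = 0)
    (hopt : ys + α • gradMat g xs = 0)
    (hx : xs = D⁻¹ * zs)
    (hu : (Abar - A) * us = ys)
    (M : Matrix (Fin n) (Fin n) ℝ) (hM : M = D⁻¹ * (Abar - A))
    (S : Matrix (Fin n ⊕ Fin n) (Fin n ⊕ Fin n) ℝ)
    (hS : S = Matrix.fromBlocks 0 M (-Mᵀ) 0) :
    M * us + α • (D⁻¹ * gradMat g (D⁻¹ * zs)) = 0 ∧
    Mᵀ * zs = 0 ∧
    S * vstack zs us + α • vstack (D⁻¹ * gradMat g (D⁻¹ * zs)) 0 = 0 :=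
  normalizedExtraPush_saddle_point_identity_general A hA1 Abar hAbar φ hφpos hconv D hD g α zs ys xs
    us hz hopt hx hu M hM S hS
end

section
/- Let G ∈ ℝ^{2n×2n}, let M ∈ ℝ^{n×n}, and set S := [[0, M], [−M^T, 0]] ∈ ℝ^{2n×2n} in 2×2 block form (so S^T = −S). For v = (z; u) ∈ ℝ^{2n×p} (z, u ∈ ℝ^{n×p}), define ∇f̄(v) := (g(z); 0) where g : ℝ^{n×p} → ℝ^{n×p} satisfies, for constants μ̄ > 0, L̄ > 0 and a fixed z* ∈ ℝ^{n×p}: μ̄‖z* − z‖² ≤ ⟨g(z*) − g(z), z* − z⟩ for all z, and ‖g(z₁) − g(z₂)‖ ≤ L̄‖z₁ − z₂‖ for all z₁, z₂. Suppose v^t, v^{t+1} ∈ ℝ^{2n×p} satisfy G^T(v^{t+1} − v^t) = −S v^{t+1} − α ∇f̄(v^t) with α > 0, and v* = (z*; u*) satisfies S v* + α ∇f̄(v*) = 0. Then for every η > 0: ⟨v* − v^{t+1}, G^T(v^t − v^{t+1})⟩ ≤ −α μ̄ ‖z^{t+1} − z*‖² + (α η/2)‖z* − z^{t+1}‖² +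 (α L̄²/(2η))‖z^t − z^{t+1}‖², where z^t, z^{t+1} denote the top n×p blocks of v^t, v^{t+1}. -/
open Matrix

/-- Frobenius (trace) inner product of two real matrices. -/
noncomputable def frob {m q : Type*} [Fintype m] [Fintype q]
    (X Y : Matrix m q ℝ) : ℝ := ∑ i, ∑ j, X i j * Y i j

/-- Frobenius norm of a real matrix. -/
noncomputable def fnorm {m q : Type*} [Fintype m] [Fintype q]
    (X : Matrix m q ℝ) : ℝ := Real.sqrt (frob X X)

/-- Top `n × p` block of a `2n × p` matrix. -/
def topBlk {n p : ℕ} (v : Matrix (Fin n ⊕ Fin n) (Fin p) ℝ) :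
    Matrix (Fin n) (Fin p) ℝ := Matrix.of fun i j => v (Sum.inl i) j

/-!
Write `w = v* − v^{t+1}`. Rearranging the iteration and the optimality condition gives
`Gᵀ(v^t − v^{t+1}) = α(∇f̄(v^t) − ∇f̄(v*)) − S w`, and `⟨w, S w⟩ = 0` because `S` is skew, so the
left-hand side equals `α ⟨z* − z^{t+1}, g(z^t) − g(z*)⟩`. Splitting `g(z^t) − g(z*)` through
`g(z^{t+1})`, strong monotonicity bounds one part by `−μ̄‖z* − z^{t+1}‖²`, Cauchy–Schwarz and the
Lipschitz bound the other by `L̄‖z* − z^{t+1}‖‖z^t − z^{t+1}‖`, and Young's inequality finishes.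
-/

section Frobenius

variable {m q : Type*} [Fintype m] [Fintype q]

lemma frob_comm (X Y : Matrix m q ℝ) : frob X Y = frob Y X := by
  simp only [frob, mul_comm]

lemma frob_add_right (X Y Z : Matrix m q ℝ) : frob X (Y + Z) = frob X Y + frob X Z := by
  simp only [frob, Matrix.add_apply, mul_add, Finset.sum_add_distrib]

lemma frob_sub_right (X Y Z : Matrix m q ℝ) : frob X (Y - Z) = frob X Y - frob X Z := by
  simp only [frob, Matrix.sub_apply, mul_sub, Finset.sum_sub_distrib]

lemma frob_neg_right (X Y : Matrix m q ℝ) : frob X (-Y) = -frob X Y := by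
  simp [frob]

lemma frob_smul_right (c : ℝ) (X Y : Matrix m q ℝ) : frob X (c • Y) = c * frob X Y := by
  simp only [frob, Matrix.smul_apply, smul_eq_mul, Finset.mul_sum, mul_left_comm]

lemma fnorm_nonneg (X : Matrix m q ℝ) : 0 ≤ fnorm X :=
  Real.sqrt_nonneg _

lemma fnorm_sub_comm (X Y : Matrix m q ℝ) : fnorm (X - Y) = fnorm (Y - X) := by
  rw [← neg_sub, fnorm, frob_neg_right, frob_comm, frob_neg_right, neg_neg, fnorm]

lemma frob_le_fnorm_mul_fnorm (X Y : Matrix m q ℝ) : frob X Y ≤ fnorm X * fnorm Y := by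
  simp only [fnorm, frob, ← Fintype.sum_prod_type', ← sq]
  exact Real.sum_mul_le_sqrt_mul_sqrt _ _ _

lemma frob_eq_trace [DecidableEq q] (X Y : Matrix m q ℝ) : frob X Y = (Xᵀ * Y).trace := by
  rw [frob, trace, Finset.sum_comm]
  simp [mul_apply]

lemma frob_mul_right [DecidableEq m] (A : Matrix m m ℝ) (X Y : Matrix m q ℝ) :
    frob X (A * Y) = frob (Aᵀ * X) Y := by
  classical
  rw [frob_eq_trace, frob_eq_trace, transpose_mul, transpose_transpose, Matrix.mul_assoc]

lemma frob_mul_self_eq_zero_of_transpose_eq_neg [DecidableEq m] {S : Matrix m m ℝ}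
    (hS : Sᵀ = -S) (X : Matrix m q ℝ) : frob X (S * X) = 0 := by
  have h := frob_mul_right S X X
  rw [hS, Matrix.neg_mul, frob_comm (-(S * X)), frob_neg_right] at h
  linarith

end Frobenius

lemma transpose_fromBlocks_skew {n : Type*} (M : Matrix n n ℝ) :
    (fromBlocks 0 M (-Mᵀ) 0)ᵀ = -fromBlocks 0 M (-Mᵀ) 0 := by
  simp [fromBlocks_transpose, fromBlocks_neg]

@[simp]
lemma vstack_apply_inl {n p : ℕ} (X Y : Matrix (Fin n) (Fin p) ℝ) (i : Fin n) (j : Fin p) :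
    vstack X Y (Sum.inl i) j = X i j := rfl

@[simp]
lemma vstack_apply_inr {n p : ℕ} (X Y : Matrix (Fin n) (Fin p) ℝ) (i : Fin n) (j : Fin p) :
    vstack X Y (Sum.inr i) j = Y i j := rfl

lemma frob_vstack_zero_right {n p : ℕ} (W : Matrix (Fin n ⊕ Fin n) (Fin p) ℝ)
    (X : Matrix (Fin n) (Fin p) ℝ) : frob W (vstack X 0) = frob (topBlk W) X := by
  simp [frob, topBlk, Fintype.sum_sum_type]

lemma topBlk_vstack {n p : ℕ} (X Y : Matrix (Fin n) (Fin p) ℝ) : topBlk (vstack X Y) = X := rfl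

lemma vstack_sub_vstack {n p : ℕ} (X Y X' Y' : Matrix (Fin n) (Fin p) ℝ) :
    vstack X Y - vstack X' Y' = vstack (X - X') (Y - Y') := by
  ext (i | i) j <;> rfl

lemma topBlk_vstack_sub {n p : ℕ} (X Y : Matrix (Fin n) (Fin p) ℝ)
    (v : Matrix (Fin n ⊕ Fin n) (Fin p) ℝ) : topBlk (vstack X Y - v) = X - topBlk v := by
  ext i j
  simp [topBlk]

lemma frob_sub_transpose_mul_eq_of_skew_step {m q : Type*} [Fintype m] [Fintype q]
    [DecidableEq m] {G S : Matrix m m ℝ} (hS : Sᵀ = -S) (F : Matrix m q ℝ → Matrix m q ℝ) (α : ℝ)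
    {v v' vs : Matrix m q ℝ} (hstep : Gᵀ * (v' - v) = -(S * v') - α • F v)
    (hfix : S * vs + α • F vs = 0) :
    frob (vs - v') (Gᵀ * (v - v')) = α * frob (vs - v') (F v - F vs) := by
  have hstep' : Gᵀ * (v - v') = S * vs - S * (vs - v') + α • F v := by
    rw [← neg_sub v' v, Matrix.mul_neg, hstep, Matrix.mul_sub]
    abel
  rw [hstep', eq_neg_of_add_eq_zero_left hfix, frob_add_right, frob_sub_right,
    frob_mul_self_eq_zero_of_transpose_eq_neg hS, frob_neg_right, frob_smul_right,
    frob_smul_right, frob_sub_right]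
  ring

lemma frob_sub_map_sub_le_of_strongMono_of_lipschitz {m q : Type*} [Fintype m] [Fintype q]
    {g : Matrix m q ℝ → Matrix m q ℝ} {μ L : ℝ} {zs : Matrix m q ℝ}
    (hmono : ∀ z, μ * fnorm (zs - z) ^ 2 ≤ frob (g zs - g z) (zs - z))
    (hlip : ∀ z1 z2, fnorm (g z1 - g z2) ≤ L * fnorm (z1 - z2)) (z z' : Matrix m q ℝ) :
    frob (zs - z') (g z - g zs) ≤
      -(μ * fnorm (zs - z') ^ 2) + L * fnorm (zs - z') * fnorm (z - z') := by
  have hsplit : g z - g zs = (g z - g z') - (g zs - g z') := by abel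
  have hlipschitz : frob (zs - z') (g z - g z') ≤ fnorm (zs - z') * (L * fnorm (z - z')) :=
    (frob_le_fnorm_mul_fnorm _ _).trans
      (mul_le_mul_of_nonneg_left (hlip z z') (fnorm_nonneg _))
  rw [hsplit, frob_sub_right, frob_comm (zs - z') (g zs - g z')]
  linarith [hmono z']

lemma mul_le_young {η : ℝ} (hη : 0 < η) (a b : ℝ) :
    a * b ≤ η / 2 * a ^ 2 + 1 / (2 * η) * b ^ 2 := by
  have h : η / 2 * a ^ 2 + 1 / (2 * η) * b ^ 2 - a * b = (η * a - b) ^ 2 / (2 * η) := by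
    field_simp
    ring
  rw [← sub_nonneg, h]
  positivity

theorem normalizedExtraPush_skew_term_bound_general
    {n p : ℕ}
    (G : Matrix (Fin n ⊕ Fin n) (Fin n ⊕ Fin n) ℝ)
    (M : Matrix (Fin n) (Fin n) ℝ)
    (S : Matrix (Fin n ⊕ Fin n) (Fin n ⊕ Fin n) ℝ)
    (hS : S = Matrix.fromBlocks 0 M (-Mᵀ) 0)
    (g : Matrix (Fin n) (Fin p) ℝ → Matrix (Fin n) (Fin p) ℝ)
    (mubar Lbar : ℝ)
    (zs : Matrix (Fin n) (Fin p) ℝ)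
    (hmono : ∀ z, mubar * fnorm (zs - z) ^ 2 ≤ frob (g zs - g z) (zs - z))
    (hlip : ∀ z1 z2, fnorm (g z1 - g z2) ≤ Lbar * fnorm (z1 - z2))
    (α : ℝ) (hα : 0 < α)
    (vt vt1 : Matrix (Fin n ⊕ Fin n) (Fin p) ℝ)
    (hit : Gᵀ * (vt1 - vt) = -(S * vt1) - α • vstack (g (topBlk vt)) 0)
    (us : Matrix (Fin n) (Fin p) ℝ)
    (vs : Matrix (Fin n ⊕ Fin n) (Fin p) ℝ) (hvs : vs = vstack zs us)
    (hopt : S * vs + α • vstack (g zs) 0 = 0) :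
    ∀ η : ℝ, 0 < η →
      frob (vs - vt1) (Gᵀ * (vt - vt1)) ≤
        -(α * mubar) * fnorm (topBlk vt1 - zs) ^ 2 +
        α * η / 2 * fnorm (zs - topBlk vt1) ^ 2 +
        α * Lbar ^ 2 / (2 * η) * fnorm (topBlk vt - topBlk vt1) ^ 2 := by
  intro η hη
  subst hvs
  have hskew : Sᵀ = -S := hS ▸ transpose_fromBlocks_skew M
  have hstep := frob_sub_transpose_mul_eq_of_skew_step hskew
    (fun v => vstack (g (topBlk v)) 0) α hit (vs := vstack zs us) hopt
  rw [vstack_sub_vstack, sub_zero, frob_vstack_zero_right, topBlk_vstack_sub, topBlk_vstack]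
    at hstep
  have hbound :=
    frob_sub_map_sub_le_of_strongMono_of_lipschitz hmono hlip (topBlk vt) (topBlk vt1)
  have hyoung :=
    mul_le_young hη (fnorm (zs - topBlk vt1)) (Lbar * fnorm (topBlk vt - topBlk vt1))
  rw [hstep, fnorm_sub_comm (topBlk vt1)]
  calc α * frob (zs - topBlk vt1) (g (topBlk vt) - g zs)
      ≤ α * (-(mubar * fnorm (zs - topBlk vt1) ^ 2) +
          (η / 2 * fnorm (zs - topBlk vt1) ^ 2 +
            1 / (2 * η) * (Lbar * fnorm (topBlk vt - topBlk vt1)) ^ 2)) := by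
        gcongr
        linarith
    _ = _ := by ring

/-- the bound on `⟨v* − v^{t+1}, Gᵀ(v^t − v^{t+1})⟩` coming from strong
monotonicity and Lipschitz continuity of `g`, the skew-symmetric block matrix `S`,
the iteration `Gᵀ(v^{t+1} − v^t) = −S v^{t+1} − α ∇f̄(v^t)`, and
`S v* + α ∇f̄(v*) = 0`. -/
theorem normalizedExtraPush_skew_term_bound
    {n p : ℕ} (hn : 1 ≤ n) (hp : 1 ≤ p)
    (G : Matrix (Fin n ⊕ Fin n) (Fin n ⊕ Fin n) ℝ)
    (M : Matrix (Fin n) (Fin n) ℝ)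
    (S : Matrix (Fin n ⊕ Fin n) (Fin n ⊕ Fin n) ℝ)
    (hS : S = Matrix.fromBlocks 0 M (-Mᵀ) 0)
    (g : Matrix (Fin n) (Fin p) ℝ → Matrix (Fin n) (Fin p) ℝ)
    (mubar Lbar : ℝ) (hmubar : 0 < mubar) (hLbar : 0 < Lbar)
    (zs : Matrix (Fin n) (Fin p) ℝ)
    (hmono : ∀ z, mubar * fnorm (zs - z) ^ 2 ≤ frob (g zs - g z) (zs - z))
    (hlip : ∀ z1 z2, fnorm (g z1 - g z2) ≤ Lbar * fnorm (z1 - z2))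
    (α : ℝ) (hα : 0 < α)
    (vt vt1 : Matrix (Fin n ⊕ Fin n) (Fin p) ℝ)
    (hit : Gᵀ * (vt1 - vt) = -(S * vt1) - α • vstack (g (topBlk vt)) 0)
    (us : Matrix (Fin n) (Fin p) ℝ)
    (vs : Matrix (Fin n ⊕ Fin n) (Fin p) ℝ) (hvs : vs = vstack zs us)
    (hopt : S * vs + α • vstack (g zs) 0 = 0) :
    ∀ η : ℝ, 0 < η →
      frob (vs - vt1) (Gᵀ * (vt - vt1)) ≤
        -(α * mubar) * fnorm (topBlk vt1 - zs) ^ 2 +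
        α * η / 2 * fnorm (zs - topBlk vt1) ^ 2 +
        α * Lbar ^ 2 / (2 * η) * fnorm (topBlk vt - topBlk vt1) ^ 2 :=
  normalizedExtraPush_skew_term_bound_general G M S hS g mubar Lbar zs hmono hlip α hα vt vt1 hit us
    vs hvs hopt
end
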